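/- arXiv:2401.16289 — 4 statements merged into one kernel-verified Lean document; each statement's English description precedes it below -/
import Mathlib

section
/- The family of all bases of the vector space 𝔽₂^r (i.e., all linearly independent r-element subsets of 𝔽₂^r \ {0}) contains no r-daisy: there do not exist a linearly independent set S = {v₁,…,v_{r−2}} and four further nonzero vectors u₁,u₂,u₃,u₄ (distinct from each other and from the vᵢ) such that for every pair {i,j} ⊆ {1,2,3,4}, the set S ∪ {uᵢ,uⱼ} is linearly independent. -/
/-!
Pass to the quotient `Q = 𝔽₂^r ⧸ span S`, which has dimension at most `r - (r - 2) = 2`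
and hence at most four elements. Independence of `S ∪ {uᵢ, uⱼ}` says that
`uᵢ ∉ span (S ∪ {uⱼ})`, so the images of the `uᵢ` in `Q` are nonzero and pairwise distinct:
four nonzero vectors plus `0` do not fit in `Q`.
-/

/-- A set of vectors is linearly independent (as a set). -/
def IndepSet (K : Type*) {V : Type*} [Field K] [AddCommGroup V] [Module K V]
    (s : Set V) : Prop :=
  LinearIndependent K (Subtype.val : s → V)

open Submodule Module

theorem Nat.card_lt_of_injective_of_ne_zero {ι V : Type*} [Zero V] [Finite V] {f : ι → V}
    (hf : f.Injective) (h0 : ∀ i, f i ≠ 0) : Nat.card ι < Nat.card V :=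
  calc Nat.card ι ≤ Nat.card {v : V // v ≠ 0} :=
        Nat.card_le_card_of_injective (fun i => ⟨f i, h0 i⟩)
          fun _ _ h => hf (congrArg Subtype.val h)
    _ < Nat.card V := Finite.card_subtype_lt (not_not.mpr rfl)

section Quotient

variable {R M : Type*} [Ring R] [AddCommGroup M] [Module R M] {s : Set M} {x y : M}

theorem Submodule.Quotient.mk_ne_zero_of_notMem_span_insert (h : x ∉ span R (insert y s)) :
    (Submodule.Quotient.mk x : M ⧸ span R s) ≠ 0 := fun hx =>
  h (span_mono (Set.subset_insert y s) ((Submodule.Quotient.mk_eq_zero _).mp hx))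

theorem Submodule.Quotient.mk_ne_of_notMem_span_insert (h : x ∉ span R (insert y s)) :
    (Submodule.Quotient.mk x : M ⧸ span R s) ≠ Submodule.Quotient.mk y := fun hxy =>
  h (mem_span_insert.mpr ⟨1, x - y, (Submodule.Quotient.eq _).mp hxy, by simp⟩)

end Quotient

section Field

variable {K V : Type*} [Field K] [AddCommGroup V] [Module K V]

theorem IndepSet.notMem_span_insert {s : Set V} {x y : V} (h : IndepSet K (s ∪ {x, y}))
    (hxs : x ∉ s) (hxy : x ≠ y) : x ∉ span K (insert y s) := by
  have hx : x ∉ insert y s := by simp [hxs, hxy]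
  have hins : s ∪ {x, y} = insert x (insert y s) := by
    ext; simp only [Set.mem_union, Set.mem_insert_iff, Set.mem_singleton_iff]; tauto
  rw [IndepSet, hins] at h
  exact ((linearIndepOn_id_insert hx).mp h).2

theorem finrank_quotient_span_finset [FiniteDimensional K V] {S : Finset V}
    (hS : IndepSet K (S : Set V)) :
    finrank K (V ⧸ span K (S : Set V)) = finrank K V - S.card := by
  rw [Submodule.finrank_quotient, finrank_span_finset_eq_card hS]

end Field

theorem no_daisy_in_bases_general (r : ℕ) :
    ¬ ∃ (S : Finset (Fin r → ZMod 2)) (u : Fin 4 → (Fin r → ZMod 2)),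
      S.card = r - 2 ∧
      IndepSet (ZMod 2) (S : Set (Fin r → ZMod 2)) ∧
      (∀ i, u i ≠ 0) ∧
      Function.Injective u ∧
      (∀ i, u i ∉ S) ∧
      (∀ i j : Fin 4, i ≠ j →
        IndepSet (ZMod 2) ((S : Set (Fin r → ZMod 2)) ∪ {u i, u j})) := by
  rintro ⟨S, u, hcard, hS, -, hinj, hnotS, hpairs⟩
  let Q := (Fin r → ZMod 2) ⧸ span (ZMod 2) (S : Set (Fin r → ZMod 2))
  have hsep (i j : Fin 4) (hij : i ≠ j) :
      u i ∉ span (ZMod 2) (insert (u j) (S : Set (Fin r → ZMod 2))) :=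
    (hpairs i j hij).notMem_span_insert (hnotS i) (hinj.ne hij)
  have hdim : finrank (ZMod 2) Q ≤ 2 := by
    rw [finrank_quotient_span_finset hS, finrank_fin_fun, hcard]; omega
  have hcardQ : Nat.card Q ≤ 4 :=
    calc Nat.card Q = 2 ^ finrank (ZMod 2) Q := by
          rw [natCard_eq_pow_finrank (K := ZMod 2), Nat.card_zmod]
      _ ≤ 2 ^ 2 := Nat.pow_le_pow_right two_pos hdim
  let v : Fin 4 → Q := fun i => Submodule.Quotient.mk (u i)
  have hv : v.Injective := fun i j h =>
    by_contra fun hij => Submodule.Quotient.mk_ne_of_notMem_span_insert (hsep i j hij) h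
  have hv0 (i : Fin 4) : v i ≠ 0 :=
    Submodule.Quotient.mk_ne_zero_of_notMem_span_insert (hsep i (i + 1) (by simp))
  have hfour : 4 < Nat.card Q := by
    simpa using Nat.card_lt_of_injective_of_ne_zero hv hv0
  omega

/-- The family of all bases of `𝔽₂^r` (all linearly independent `r`-element subsets of
`𝔽₂^r \ {0}`) contains no `r`-daisy. -/
theorem no_daisy_in_bases (r : ℕ) (hr : 2 ≤ r) :
    ¬ ∃ (S : Finset (Fin r → ZMod 2)) (u : Fin 4 → (Fin r → ZMod 2)),
      S.card = r - 2 ∧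
      IndepSet (ZMod 2) (S : Set (Fin r → ZMod 2)) ∧
      (∀ i, u i ≠ 0) ∧
      Function.Injective u ∧
      (∀ i, u i ∉ S) ∧
      (∀ i j : Fin 4, i ≠ j →
        IndepSet (ZMod 2) ((S : Set (Fin r → ZMod 2)) ∪ {u i, u j})) :=
  no_daisy_in_bases_general r
end

section
/- Let q be a prime power and m ≥ 0, s ≥ 2 with s even, and set t = ⌊s·q^{2m/s + 1}⌋ + 1. Let W be an (r−s)-dimensional subspace of 𝔽_q^{m+r}, and let u₁,…,u_t be t vectors in 𝔽_q^{m+r}. Then there exist s of these vectors, u_{i₁},…,u_{i_s}, whose images in the quotient 𝔽_q^{m+r}/W are linearly dependent. -/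
/-!
Suppose every `s = 2k` of the images `vᵢ` of the `uᵢ` in `V = 𝔽_q^(m+r)/W` were linearly
independent. Then two combinations `∑ cᵢ vᵢ` with at most `k` nonzero coefficients each can only
agree if their coefficient vectors agree, since their difference has at most `2k` nonzero
coefficients. Counting coefficient vectors of Hamming weight exactly `k` gives
`C(t, k) (q - 1)^k ≤ |V| = q^(m+2k)`, while `t^k ≤ k^k C(t, k)` and `t > 2k q^(m/k + 1)` make the
left side larger.
-/

open Finset Function
open scoped Nat

/-- `(t / k)^k ≤ C(t, k)`: each factor `(t - i) / (k - i)` of `C(t, k)` is at least `t / k`. -/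
theorem Nat.pow_le_pow_mul_choose {k t : ℕ} (hkt : k ≤ t) : t ^ k ≤ k ^ k * t.choose k := by
  have key : t ^ k * k ! ≤ k ^ k * t.descFactorial k :=
    calc t ^ k * k ! = ∏ i ∈ range k, t * (k - i) := by
          rw [prod_mul_distrib, prod_const, card_range, ← descFactorial_self,
            descFactorial_eq_prod_range]
      _ ≤ ∏ i ∈ range k, k * (t - i) := prod_le_prod' fun i hi => by
          have hik : i < k := mem_range.mp hi
          zify [hik.le, hik.le.trans hkt]
          nlinarith
      _ = k ^ k * t.descFactorial k := by
          rw [prod_mul_distrib, prod_const, card_range, descFactorial_eq_prod_range]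
  rw [descFactorial_eq_factorial_mul_choose, mul_left_comm, mul_comm (t ^ k)] at key
  exact Nat.le_of_mul_le_mul_left key k.factorial_pos

section
variable {R ι : Type*} [Fintype ι] [DecidableEq ι] [Zero R] [Fintype R] [DecidableEq R]

theorem card_filter_support_eq (A : Finset ι) :
    #{d : ι → R | ({i | d i ≠ 0} : Finset ι) = A} = (Fintype.card R - 1) ^ #A := by
  have hpi : ({d : ι → R | ({i | d i ≠ 0} : Finset ι) = A} : Finset _) =
      Fintype.piFinset fun i => if i ∈ A then univ.erase 0 else {0} := by
    ext d
    simp only [mem_filter, mem_univ, true_and, Fintype.mem_piFinset, Finset.ext_iff]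
    refine forall_congr' fun i => ?_
    split_ifs with hi <;> simp [hi]
  rw [hpi]
  calc #(Fintype.piFinset fun i => if i ∈ A then univ.erase (0 : R) else {0})
      = ∏ i, if i ∈ A then Fintype.card R - 1 else 1 := by
        rw [Fintype.card_piFinset]
        exact prod_congr rfl fun i _ => by split_ifs <;> simp [card_erase_of_mem]
    _ = (Fintype.card R - 1) ^ #A := by rw [prod_ite_mem, univ_inter, prod_const]

theorem card_filter_hammingNorm_eq (k : ℕ) :
    #{d : ι → R | hammingNorm d = k} = (Fintype.card ι).choose k * (Fintype.card R - 1) ^ k := by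
  rw [card_eq_sum_card_fiberwise (f := fun d : ι → R => ({i | d i ≠ 0} : Finset ι))
    (t := powersetCard k univ) (fun d hd => by simpa [hammingNorm] using hd)]
  rw [sum_congr rfl fun A hA => ?_, sum_const, card_powersetCard, card_univ, smul_eq_mul]
  rw [mem_powersetCard_univ] at hA
  rw [filter_filter, ← hA, ← card_filter_support_eq]
  congr 1
  ext d
  simp only [mem_filter, mem_univ, true_and, and_iff_right_iff_imp]
  exact fun h => by rw [hammingNorm, h]

end

section
variable {R M ι : Type*} [Ring R] [AddCommGroup M] [Module R M] [Fintype ι] {v : ι → M}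

theorem linearIndepOn_of_forall_linearIndependent_comp {s : ℕ}
    (h : ∀ e : Fin s → ι, Injective e → LinearIndependent R (v ∘ e))
    (hs : s ≤ Fintype.card ι) {S : Finset ι} (hS : #S ≤ s) : LinearIndepOn R v S := by
  obtain ⟨T, hST, -, hT⟩ := exists_subsuperset_card_eq (subset_univ S) hS (by simpa using hs)
  subst hT
  set e : Fin #T → ι := Subtype.val ∘ T.equivFin.symm
  have he : Injective e := Subtype.val_injective.comp T.equivFin.symm.injective
  have hrange : Set.range e = T := by simp [e, Set.range_comp]
  refine LinearIndepOn.mono ?_ (coe_subset.mpr hST)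
  rw [← hrange, linearIndepOn_range_iff he]
  exact h e he

theorem eq_zero_of_hammingNorm_le [DecidableEq R] {s : ℕ}
    (h : ∀ S : Finset ι, #S ≤ s → LinearIndepOn R v S) {d : ι → R}
    (hd : hammingNorm d ≤ s) (hsum : ∑ i, d i • v i = 0) : d = 0 := by
  set S : Finset ι := {i | d i ≠ 0}
  have hout : ∀ i ∉ S, d i = 0 := by simp [S]
  have hsumS : ∑ i ∈ S, d i • v i = 0 := by
    rwa [sum_subset (subset_univ S) fun i _ hi => by rw [hout i hi, zero_smul]]
  funext i
  by_cases hi : i ∈ S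
  · exact linearIndepOn_iff''.mp (h S hd) S d subset_rfl hout hsumS i hi
  · exact hout i hi

theorem injOn_sum_smul_of_hammingNorm_le [DecidableEq R] {k : ℕ}
    (h : ∀ S : Finset ι, #S ≤ 2 * k → LinearIndepOn R v S) :
    Set.InjOn (fun d : ι → R => ∑ i, d i • v i) {d | hammingNorm d ≤ k} := by
  intro d hd d' hd' heq
  have hdist : hammingNorm (d - d') ≤ 2 * k := by
    rw [← neg_add_eq_sub, ← hammingDist_eq_hammingNorm, two_mul]
    calc hammingDist d' d ≤ hammingDist d' 0 + hammingDist 0 d := hammingDist_triangle _ _ _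
      _ ≤ k + k := by
        rw [hammingDist_zero_right, hammingDist_comm, hammingDist_zero_right]
        exact add_le_add hd' hd
  refine sub_eq_zero.mp (eq_zero_of_hammingNorm_le h hdist ?_)
  simp only [Pi.sub_apply, sub_smul, sum_sub_distrib]
  exact sub_eq_zero.mpr heq

theorem choose_mul_pow_le_natCard [Fintype R] [Finite M] {k : ℕ}
    (h : ∀ S : Finset ι, #S ≤ 2 * k → LinearIndepOn R v S) :
    (Fintype.card ι).choose k * (Fintype.card R - 1) ^ k ≤ Nat.card M := by
  classical
  have := Fintype.ofFinite M
  rw [← card_filter_hammingNorm_eq, Nat.card_eq_fintype_card, ← card_univ]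
  refine card_le_card_of_injOn _ (fun _ _ => mem_univ _)
    ((injOn_sum_smul_of_hammingNorm_le h).mono fun d hd => ?_)
  exact (mem_filter.mp hd).2.le

end

theorem lt_of_mul_rpow_lt {a q x t : ℝ} (ha : 0 ≤ a) (hq : 1 ≤ q) (hx : 0 ≤ x)
    (h : a * q ^ x < t) : a < t :=
  (le_mul_of_one_le_right ha (Real.one_le_rpow hq hx)).trans_lt h

theorem pow_mul_pow_lt_pow_mul_pow_of_lt_rpow {q t k m : ℕ} (hk : k ≠ 0) (hq : 2 ≤ q)
    (ht : 2 * k * (q : ℝ) ^ ((m : ℝ) / k + 1) < t) :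
    k ^ k * q ^ (m + 2 * k) < t ^ k * (q - 1) ^ k := by
  have hqR : (2 : ℝ) ≤ q := by exact_mod_cast hq
  set x : ℝ := (q : ℝ) ^ ((m : ℝ) / k)
  have hxk : x ^ k = (q : ℝ) ^ m := by
    rw [← Real.rpow_natCast, ← Real.rpow_mul (by positivity), div_mul_cancel₀ _ (by simpa),
      Real.rpow_natCast]
  have hx : 0 < x := by positivity
  rw [Real.rpow_add_one (by positivity)] at ht
  have hbase : (k : ℝ) * x * q ^ 2 < t * (q - 1) := by
    have : (t : ℝ) * q ≤ 2 * (t * (q - 1)) := by nlinarith [(t.cast_nonneg : (0 : ℝ) ≤ t)]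
    nlinarith
  have hR : ((k : ℝ) * x * q ^ 2) ^ k < (t * (q - 1)) ^ k :=
    pow_lt_pow_left₀ hbase (by positivity) hk
  have hlhs : ((k : ℝ) * x * q ^ 2) ^ k = k ^ k * q ^ (m + 2 * k) := by
    rw [mul_pow, mul_pow, hxk, ← pow_mul, pow_add]
    ring
  rw [hlhs, mul_pow] at hR
  have hcast : ((q - 1 : ℕ) : ℝ) = q - 1 := by rw [Nat.cast_sub (by omega), Nat.cast_one]
  rw [← hcast] at hR
  exact_mod_cast hR

theorem pow_add_two_mul_lt_choose_mul_pow {q t k m : ℕ} (hk : k ≠ 0) (hq : 2 ≤ q)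
    (ht : 2 * k * (q : ℝ) ^ ((m : ℝ) / k + 1) < t) :
    q ^ (m + 2 * k) < t.choose k * (q - 1) ^ k := by
  have hkt : k ≤ t := by
    have := lt_of_mul_rpow_lt (by positivity) (by exact_mod_cast hq.trans' one_le_two)
      (by positivity) ht
    exact_mod_cast (show (k : ℝ) ≤ t by linarith)
  refine lt_of_mul_lt_mul_left (a := k ^ k) ?_ (Nat.zero_le _)
  calc k ^ k * q ^ (m + 2 * k) < t ^ k * (q - 1) ^ k :=
        pow_mul_pow_lt_pow_mul_pow_of_lt_rpow hk hq ht
    _ ≤ k ^ k * t.choose k * (q - 1) ^ k := by gcongr; exact Nat.pow_le_pow_mul_choose hkt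
    _ = k ^ k * (t.choose k * (q - 1) ^ k) := mul_assoc _ _ _

/-- Let `q` be a prime power, `s ≥ 2` even, `t = ⌊s·q^(2m/s+1)⌋ + 1`, and `W` an
`(r-s)`-dimensional subspace of `𝔽_q^(m+r)`. Then among any `t` vectors of `𝔽_q^(m+r)`,
some `s` of them have linearly dependent images in the quotient `𝔽_q^(m+r)/W`. -/
theorem daisy_quotient_dependent (q m r s t : ℕ) (F : Type*) [Field F] [Fintype F]
    (hF : Fintype.card F = q) (hs : Even s) (hs2 : 2 ≤ s) (hsr : s ≤ r)
    (ht : t = ⌊(s : ℝ) * (q : ℝ) ^ ((2 * m) / (s : ℝ) + 1)⌋₊ + 1)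
    (W : Submodule F (Fin (m + r) → F)) (hW : Module.finrank F W = r - s)
    (u : Fin t → (Fin (m + r) → F)) :
    ∃ e : Fin s → Fin t, Function.Injective e ∧
      ¬ LinearIndependent F
        (fun k : Fin s => Submodule.Quotient.mk (p := W) (u (e k))) := by
  obtain ⟨k, rfl⟩ := hs
  by_contra! hindep
  have hq : 2 ≤ q := hF ▸ Fintype.one_lt_card
  have htR : 2 * k * (q : ℝ) ^ ((m : ℝ) / k + 1) < t := by
    have hexp : (2 * m : ℝ) / ↑(k + k) = m / k := by push_cast; field_simp; ring
    have h := Nat.lt_floor_add_one ((↑(k + k) : ℝ) * (q : ℝ) ^ ((2 * m) / (↑(k + k) : ℝ) + 1))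
    rw [← Nat.cast_add_one, ← ht, hexp] at h
    push_cast at h
    linarith
  have hst : k + k ≤ t := by
    have := lt_of_mul_rpow_lt (by positivity) (by exact_mod_cast hq.trans' one_le_two)
      (by positivity) htR
    exact_mod_cast (show ((k + k : ℕ) : ℝ) ≤ t by push_cast; linarith)
  have hdim : Module.finrank F ((Fin (m + r) → F) ⧸ W) = m + 2 * k := by
    have := Submodule.finrank_quotient_add_finrank W
    rw [Module.finrank_fin_fun] at this
    omega
  have hcount := choose_mul_pow_le_natCard (v := fun i => Submodule.Quotient.mk (p := W) (u i))
    (R := F) (k := k) fun S hS =>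
      linearIndepOn_of_forall_linearIndependent_comp hindep (by simpa using hst) (by omega)
  rw [Fintype.card_fin, hF, Module.natCard_eq_pow_finrank (K := F), Nat.card_eq_fintype_card, hF,
    hdim] at hcount
  exact (pow_add_two_mul_lt_choose_mul_pow (by omega) hq htR).not_ge hcount
end

section
/- Let ℱ be a 𝒟_r-free r-uniform hypergraph on vertex set [N] (containing no r-daisy), and let the blow-up 𝒢 on vertex set [n], n a multiple of N with classes C₁,…,C_N of size n/N, consist of all r-sets {x₁,…,x_r} with xᵢ ∈ C_{jᵢ} for distinct j₁,…,j_r with {j₁,…,j_r} ∈ ℱ. Then 𝒢 is 𝒟_r-free. -/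
/-- A family `F` of finite sets contains an `r`-daisy if there are an `(r-2)`-set `S`
(the stem) and a disjoint `4`-set `T` such that `S ∪ X ∈ F` for every 2-subset `X` of
`T`. -/
def ContainsDaisy {α : Type*} [DecidableEq α] (r : ℕ) (F : Finset (Finset α)) : Prop :=
  ∃ S T : Finset α, S.card = r - 2 ∧ T.card = 4 ∧ Disjoint S T ∧
    ∀ X ⊆ T, X.card = 2 → S ∪ X ∈ F

/-!
Any two vertices of a daisy lie in a common petal `S ∪ X`. So if a map `f` is injective on
every edge of `𝒢` and sends edges to edges of `ℱ`, it is injective on the whole daisy, and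
the image of the stem and of the `4`-set form a daisy of `ℱ`.
-/

namespace Finset

variable {α β : Type*} [DecidableEq α]

theorem exists_card_two_subset_mem_union {S T : Finset α} (hT : 2 ≤ T.card) {a b : α}
    (ha : a ∈ S ∪ T) (hb : b ∈ S ∪ T) :
    ∃ X ⊆ T, X.card = 2 ∧ a ∈ S ∪ X ∧ b ∈ S ∪ X := by
  have hpair : (({a, b} : Finset α) ∩ T).card ≤ 2 :=
    (card_le_card inter_subset_left).trans card_le_two
  obtain ⟨X, hpairX, hXT, hX⟩ := exists_subsuperset_card_eq inter_subset_right hpair hT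
  have hmem : ∀ x ∈ S ∪ T, x ∈ ({a, b} : Finset α) → x ∈ S ∪ X := by
    intro x hx hxab
    rcases mem_union.mp hx with hxS | hxT
    · exact mem_union_left _ hxS
    · exact mem_union_right _ (hpairX (mem_inter.mpr ⟨hxab, hxT⟩))
  exact ⟨X, hXT, hX, hmem a ha (by simp), hmem b hb (by simp)⟩

theorem injOn_union_of_forall_card_two {f : α → β} {S T : Finset α} (hT : 2 ≤ T.card)
    (h : ∀ X ⊆ T, X.card = 2 → Set.InjOn f ↑(S ∪ X)) : Set.InjOn f ↑(S ∪ T) := by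
  intro a ha b hb hab
  obtain ⟨X, hXT, hX, haX, hbX⟩ := exists_card_two_subset_mem_union hT ha hb
  exact h X hXT hX haX hbX hab

end Finset

open Finset in
theorem ContainsDaisy.of_injOn_image {α β : Type*} [DecidableEq α] [DecidableEq β] {r : ℕ}
    {G : Finset (Finset α)} {F : Finset (Finset β)} (f : α → β)
    (hG : ∀ A ∈ G, Set.InjOn f ↑A ∧ A.image f ∈ F) (h : ContainsDaisy r G) :
    ContainsDaisy r F := by
  obtain ⟨S, T, hS, hT, hST, hpetal⟩ := h
  have hinj : Set.InjOn f ↑(S ∪ T) :=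
    injOn_union_of_forall_card_two (by omega) fun X hXT hX => (hG _ (hpetal X hXT hX)).1
  have hinjS : Set.InjOn f ↑S := hinj.mono (by simp)
  have hinjT : Set.InjOn f ↑T := hinj.mono (by simp)
  refine ⟨S.image f, T.image f, by rw [card_image_of_injOn hinjS, hS],
    by rw [card_image_of_injOn hinjT, hT], ?_, ?_⟩
  · rw [disjoint_left]
    rintro _ hyS hyT
    obtain ⟨s, hs, rfl⟩ := mem_image.mp hyS
    obtain ⟨t, ht, hts⟩ := mem_image.mp hyT
    obtain rfl : t = s := hinj (by simp [ht]) (by simp [hs]) hts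
    exact disjoint_left.mp hST hs ht
  · intro Y hYT hY
    obtain ⟨X, hXT, rfl⟩ := subset_image_iff.mp hYT
    rw [card_image_of_injOn (hinjT.mono (by simpa using hXT))] at hY
    simpa only [image_union] using (hG _ (hpetal X hXT hY)).2

theorem blowup_daisy_free_general (r N n : ℕ)
    (c : Fin n → Fin N)
    (F : Finset (Finset (Fin N)))
    (hF : ¬ ContainsDaisy r F)
    (G : Finset (Finset (Fin n)))
    (hG : ∀ A : Finset (Fin n),
      A ∈ G ↔ A.card = r ∧ Set.InjOn c (A : Set (Fin n)) ∧ A.image c ∈ F) :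
    ¬ ContainsDaisy r G :=
  fun h => hF (h.of_injOn_image c fun A hA => ((hG A).mp hA).2)

/-- The blow-up of a daisy-free `r`-uniform hypergraph is daisy-free. Here `c` assigns to
each of the `n = N·M` vertices its class (all classes of size `M = n / N`), and the
blow-up `G` consists of the `r`-sets whose vertices lie in `r` distinct classes whose set
of indices forms an edge of `F`. -/
theorem blowup_daisy_free (r N n M : ℕ) (hr : 2 ≤ r) (hn : n = N * M)
    (c : Fin n → Fin N)
    (hclass : ∀ j : Fin N, (Finset.univ.filter (fun x => c x = j)).card = n / N)
    (F : Finset (Finset (Fin N))) (hunif : ∀ e ∈ F, e.card = r)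
    (hF : ¬ ContainsDaisy r F)
    (G : Finset (Finset (Fin n)))
    (hG : ∀ A : Finset (Fin n),
      A ∈ G ↔ A.card = r ∧ Set.InjOn c (A : Set (Fin n)) ∧ A.image c ∈ F) :
    ¬ ContainsDaisy r G :=
  blowup_daisy_free_general r N n c F hF G hG
end

section
/- If ℱ ⊆ {0,1}^{d+2} intersects the vertex set of every d-dimensional subcube of {0,1}^{d+2}, then ℱ separates pairs: for all 1 ≤ i < j ≤ d+2 there exists x ∈ ℱ with x_i ≠ x_j. Consequently |ℱ| ≥ log₂(d+2). -/
/-!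
Fixing `x_i = true, x_j = false` on a pair of coordinates `i ≠ j` gives a subcube of
codimension two, and a point of `F` in it separates `i` from `j`. If `F` separates all pairs,
the columns `i ↦ (x ↦ x i)` are pairwise distinct functions `F → Bool`, so there are at most
`2 ^ |F|` coordinates.
-/

theorem exists_mem_ne_of_meets_pair_subcubes {ι : Type*} [DecidableEq ι]
    {F : Finset (ι → Bool)}
    (hmeet : ∀ I : Finset ι, I.card = 2 → ∀ c : ι → Bool, ∃ x ∈ F, ∀ i ∈ I, x i = c i)
    {i j : ι} (hij : i ≠ j) : ∃ x ∈ F, x i ≠ x j := by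
  obtain ⟨x, hxF, hx⟩ := hmeet {i, j} (Finset.card_pair hij) (fun k => decide (k = i))
  refine ⟨x, hxF, ?_⟩
  rw [hx i (by simp), hx j (by simp)]
  simp [hij.symm]

theorem card_le_card_pow_card_of_separates {ι α : Type*} [Fintype ι] [Fintype α]
    {F : Finset (ι → α)} (hsep : ∀ i j : ι, i ≠ j → ∃ x ∈ F, x i ≠ x j) :
    Fintype.card ι ≤ Fintype.card α ^ F.card := by
  classical
  have hcolumns : Function.Injective fun (i : ι) (x : F) => (x : ι → α) i := by
    intro i j hij
    by_contra hne
    obtain ⟨x, hxF, hx⟩ := hsep i j hne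
    exact hx (congrFun hij ⟨x, hxF⟩)
  simpa using Fintype.card_le_of_injective _ hcolumns

/-- If `F ⊆ {0,1}^(d+2)` meets the vertex set of every `d`-dimensional subcube, then `F`
separates pairs of coordinates, and consequently `|F| ≥ log₂(d+2)`. -/
theorem transversal_separates_pairs (d : ℕ) (F : Finset (Fin (d + 2) → Bool))
    (hmeet : ∀ I : Finset (Fin (d + 2)), I.card = 2 → ∀ c : Fin (d + 2) → Bool,
      ∃ x ∈ F, ∀ i ∈ I, x i = c i) :
    (∀ i j : Fin (d + 2), i ≠ j → ∃ x ∈ F, x i ≠ x j) ∧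
    Real.logb 2 (d + 2) ≤ (F.card : ℝ) := by
  have hsep : ∀ i j : Fin (d + 2), i ≠ j → ∃ x ∈ F, x i ≠ x j :=
    fun _ _ hij => exists_mem_ne_of_meets_pair_subcubes hmeet hij
  refine ⟨hsep, ?_⟩
  have hcard : d + 2 ≤ 2 ^ F.card := by
    simpa using card_le_card_pow_card_of_separates hsep
  rw [Real.logb_le_iff_le_rpow one_lt_two (by positivity), Real.rpow_natCast]
  exact_mod_cast hcard
end
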